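/- For every natural number n, the identity ∑_{k=0}^n C(2k,k)^2 * C(3k,k) * C(k, n-k) * (-27)^(n-k) = ∑_{k=0}^n C(2k,k) * C(3k,k) * C(2(n-k), n-k) * C(3(n-k), n-k) holds. -/

import Mathlib

/-
Both sides are diagonal sums `∑ₖ F(n, k)` of hypergeometric terms. Creative telescoping
(Zeilberger's algorithm) produces certificates `G(n, k)` with
`c₀(n) F(n, k) + c₁(n) F(n+1, k) + c₂(n) F(n+2, k) = G(n, k+1) - G(n, k)` for the same
coefficients on both sides, so summing over `k` shows that both sides satisfy
`(n+2)³ u(n+2) = 3(2n+3)(9n²+27n+22) u(n+1) - 81(n+1)(3n+2)(3n+4) u(n)`.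
Since `(n+2)³ ≠ 0` and both sides equal `1` and `12` at `n = 0, 1`, they agree.
-/

open Finset Nat

section Recurrence

variable {R : Type*} [CommRing R] (c₀ c₁ c₂ : ℕ → R)

def diagonalSum (F : ℕ → ℕ → R) (n : ℕ) : R := ∑ k ∈ range (n + 1), F n k

theorem diagonalSum_eq_sum_range {F : ℕ → ℕ → R} (hF : ∀ n k, n < k → F n k = 0) {n N : ℕ}
    (hN : n < N) : diagonalSum F n = ∑ k ∈ range N, F n k :=
  sum_subset (range_subset_range.2 hN) fun k _ hk ↦ hF n k (by simpa using hk)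

theorem diagonalSum_recurrence_of_telescoping {F G : ℕ → ℕ → R}
    (hF : ∀ n k, n < k → F n k = 0) (hG₀ : ∀ n, G n 0 = 0) (hG : ∀ n, G n (n + 3) = 0)
    (hFG : ∀ n k, c₀ n * F n k + c₁ n * F (n + 1) k + c₂ n * F (n + 2) k = G n (k + 1) - G n k)
    (n : ℕ) :
    c₀ n * diagonalSum F n + c₁ n * diagonalSum F (n + 1) + c₂ n * diagonalSum F (n + 2) = 0 := by
  obtain ⟨h₀, h₁, h₂⟩ : n < n + 3 ∧ n + 1 < n + 3 ∧ n + 2 < n + 3 := by omega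
  rw [diagonalSum_eq_sum_range hF h₀, diagonalSum_eq_sum_range hF h₁,
    diagonalSum_eq_sum_range hF h₂,
    mul_sum, mul_sum, mul_sum, ← sum_add_distrib, ← sum_add_distrib,
    sum_congr rfl fun k _ ↦ hFG n k, sum_range_sub, hG, hG₀, sub_zero]

theorem eq_of_recurrence [IsDomain R] {u v : ℕ → R} (hc₂ : ∀ n, c₂ n ≠ 0)
    (hu : ∀ n, c₀ n * u n + c₁ n * u (n + 1) + c₂ n * u (n + 2) = 0)
    (hv : ∀ n, c₀ n * v n + c₁ n * v (n + 1) + c₂ n * v (n + 2) = 0)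
    (h₀ : u 0 = v 0) (h₁ : u 1 = v 1) : u = v := by
  funext n
  induction n using Nat.twoStepInduction with
  | zero => exact h₀
  | one => exact h₁
  | more n ih₀ ih₁ =>
    refine mul_left_cancel₀ (hc₂ n) ?_
    linear_combination hu n - hv n - c₀ n * ih₀ - c₁ n * ih₁

end Recurrence

section Ratios

variable {K : Type*} [Field K] [CharZero K]

theorem Nat.cast_choose_succ_right (n k : ℕ) :
    (n.choose (k + 1) : K) = (n - k) / (k + 1) * n.choose k := by
  rw [div_mul_eq_mul_div, eq_div_iff (Nat.cast_add_one_ne_zero k)]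
  rcases le_or_gt k n with h | h
  · rw [← Nat.cast_sub h]
    exact_mod_cast (choose_succ_right_eq n k).trans (mul_comm _ _)
  · simp [choose_eq_zero_of_lt h, choose_eq_zero_of_lt (h.trans (lt_add_one k))]

theorem Nat.cast_choose_succ_succ (n k : ℕ) :
    ((n + 1).choose (k + 1) : K) = (n + 1) / (k + 1) * n.choose k := by
  rw [div_mul_eq_mul_div, eq_div_iff (Nat.cast_add_one_ne_zero k)]
  exact_mod_cast (add_one_mul_choose_eq n k).symm

theorem Nat.cast_centralBinom_succ (n : ℕ) :
    (centralBinom (n + 1) : K) = 2 * (2 * n + 1) / (n + 1) * centralBinom n := by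
  rw [div_mul_eq_mul_div, eq_div_iff (Nat.cast_add_one_ne_zero n), mul_comm]
  exact_mod_cast succ_mul_centralBinom_succ n

def trinom (m : ℕ) : ℕ := (2 * m).choose m * (3 * m).choose m

theorem trinom_zero : trinom 0 = 1 := rfl

theorem cast_trinom (m : ℕ) : (trinom m : K) = (3 * m)! / (m ! ^ 3) := by
  have h₂ : (2 * m).choose m = (m + m).choose m := by rw [two_mul]
  have h₃ : (3 * m).choose m = (m + 2 * m).choose m := by rw [← one_add_mul]
  rw [trinom, h₂, h₃, Nat.cast_mul, cast_add_choose, cast_add_choose, ← two_mul, ← one_add_mul]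
  have : ((2 * m)! : K) ≠ 0 := by exact_mod_cast factorial_ne_zero _
  field_simp

theorem cast_trinom_succ (m : ℕ) :
    (trinom (m + 1) : K) = 3 * (3 * m + 1) * (3 * m + 2) / (m + 1) ^ 2 * trinom m := by
  have h : 3 * (m + 1) = 3 * m + 2 + 1 := by ring
  rw [cast_trinom, cast_trinom, h, factorial_succ, factorial_succ, factorial_succ,
    factorial_succ]
  have : (m ! : K) ≠ 0 := by exact_mod_cast factorial_ne_zero _
  field_simp
  push_cast
  ring

end Ratios

def lhsTerm (n k : ℕ) : ℚ :=
  if k ≤ n then centralBinom k * trinom k * k.choose (n - k) * (-27) ^ (n - k) else 0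

def lhsCert (n k : ℕ) : ℚ := -(k ^ 2 * (n + 2)) * lhsTerm (n + 2) k

theorem lhsTerm_of_eq_add {n k m : ℕ} (h : n = k + m) :
    lhsTerm n k = centralBinom k * trinom k * k.choose m * (-27) ^ m := by
  rw [lhsTerm, if_pos (h ▸ le_add_right k m), h, Nat.add_sub_cancel_left]

theorem lhsTerm_of_lt {n k : ℕ} (h : n < k) : lhsTerm n k = 0 := if_neg (not_le.2 h)

theorem lhsTerm_telescopes (n k : ℕ) :
    81 * (3 * n + 2) * (3 * n + 4) * (n + 1) * lhsTerm n k
      + -3 * (2 * n + 3) * (9 * n ^ 2 + 27 * n + 22) * lhsTerm (n + 1) k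
      + (n + 2) ^ 3 * lhsTerm (n + 2) k = lhsCert n (k + 1) - lhsCert n k := by
  rcases le_or_gt k n with hk | hk
  · obtain ⟨m, rfl⟩ := exists_add_of_le hk
    rw [lhsCert, lhsCert, lhsTerm_of_eq_add (m := m) rfl,
      lhsTerm_of_eq_add (m := m + 1) (by ring), lhsTerm_of_eq_add (m := m + 2) (by ring),
      lhsTerm_of_eq_add (m := m + 1) (by ring), cast_choose_succ_right k (m + 1),
      cast_choose_succ_right k m, cast_choose_succ_succ k m, cast_centralBinom_succ,
      cast_trinom_succ]
    push_cast
    field_simp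
    ring
  obtain rfl | rfl | hk : k = n + 1 ∨ k = n + 2 ∨ n + 2 < k := by omega
  · rw [lhsCert, lhsCert, lhsTerm_of_lt (lt_add_one n), lhsTerm_of_eq_add (m := 0) rfl,
      lhsTerm_of_eq_add (m := 1) rfl, lhsTerm_of_eq_add (m := 0) rfl,
      cast_centralBinom_succ (n + 1), cast_trinom_succ (n + 1)]
    simp only [choose_zero_right, choose_one_right]
    push_cast
    field_simp
    ring
  · rw [lhsCert, lhsCert, lhsTerm_of_lt (by omega : n < n + 2),
      lhsTerm_of_lt (by omega : n + 1 < n + 2),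
      lhsTerm_of_lt (by omega : n + 2 < n + 2 + 1), lhsTerm_of_eq_add (m := 0) rfl]
    push_cast
    ring
  · simp only [lhsCert, lhsTerm_of_lt (by omega : n < k), lhsTerm_of_lt (by omega : n + 1 < k),
      lhsTerm_of_lt hk, lhsTerm_of_lt (by omega : n + 2 < k + 1)]
    ring

def rhsTerm (n k : ℕ) : ℚ := if k ≤ n then trinom k * trinom (n - k) else 0

def rhsCert (n k : ℕ) : ℚ :=
  k ^ 2 * ((2 * k - 3 * n - 6) * rhsTerm (n + 2) k + 27 * (3 * n - 2 * k + 4) * rhsTerm (n + 1) k)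

theorem rhsTerm_of_eq_add {n k m : ℕ} (h : n = k + m) : rhsTerm n k = trinom k * trinom m := by
  rw [rhsTerm, if_pos (h ▸ le_add_right k m), h, Nat.add_sub_cancel_left]

theorem rhsTerm_of_lt {n k : ℕ} (h : n < k) : rhsTerm n k = 0 := if_neg (not_le.2 h)

theorem rhsTerm_telescopes (n k : ℕ) :
    81 * (3 * n + 2) * (3 * n + 4) * (n + 1) * rhsTerm n k
      + -3 * (2 * n + 3) * (9 * n ^ 2 + 27 * n + 22) * rhsTerm (n + 1) k
      + (n + 2) ^ 3 * rhsTerm (n + 2) k = rhsCert n (k + 1) - rhsCert n k := by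
  rcases le_or_gt k n with hk | hk
  · obtain ⟨m, rfl⟩ := exists_add_of_le hk
    rw [rhsCert, rhsCert, rhsTerm_of_eq_add (m := m) rfl,
      rhsTerm_of_eq_add (m := m + 1) (by ring), rhsTerm_of_eq_add (m := m + 2) (by ring),
      rhsTerm_of_eq_add (m := m + 1) (by ring), rhsTerm_of_eq_add (m := m) (by ring),
      cast_trinom_succ (m + 1), cast_trinom_succ m, cast_trinom_succ k]
    push_cast
    field_simp
    ring
  obtain rfl | rfl | hk : k = n + 1 ∨ k = n + 2 ∨ n + 2 < k := by omega
  · rw [rhsCert, rhsCert, rhsTerm_of_lt (lt_add_one n), rhsTerm_of_eq_add (m := 0) rfl,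
      rhsTerm_of_eq_add (m := 1) rfl, rhsTerm_of_eq_add (m := 0) rfl,
      rhsTerm_of_lt (by omega : n + 1 < n + 1 + 1), cast_trinom_succ (n + 1), cast_trinom_succ 0,
      trinom_zero]
    push_cast
    field_simp
    ring
  · rw [rhsCert, rhsCert, rhsTerm_of_lt (by omega : n < n + 2),
      rhsTerm_of_lt (by omega : n + 1 < n + 2),
      rhsTerm_of_lt (by omega : n + 2 < n + 2 + 1), rhsTerm_of_lt (by omega : n + 1 < n + 2 + 1),
      rhsTerm_of_eq_add (m := 0) rfl, trinom_zero]
    push_cast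
    ring
  · simp only [rhsCert, rhsTerm_of_lt (by omega : n < k), rhsTerm_of_lt (by omega : n + 1 < k),
      rhsTerm_of_lt hk, rhsTerm_of_lt (by omega : n + 2 < k + 1),
      rhsTerm_of_lt (by omega : n + 1 < k + 1)]
    ring

theorem diagonalSum_lhsTerm_eq_rhsTerm : diagonalSum lhsTerm = diagonalSum rhsTerm := by
  refine eq_of_recurrence (fun n : ℕ ↦ (81 * (3 * n + 2) * (3 * n + 4) * (n + 1) : ℚ))
    (fun n : ℕ ↦ (-3 * (2 * n + 3) * (9 * n ^ 2 + 27 * n + 22) : ℚ))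
    (fun n : ℕ ↦ ((n + 2) ^ 3 : ℚ))
    (fun _ ↦ by positivity) ?_ ?_ ?_ ?_
  · refine diagonalSum_recurrence_of_telescoping _ _ _ (G := lhsCert) (fun _ _ ↦ lhsTerm_of_lt)
      (fun _ ↦ by simp [lhsCert]) (fun _ ↦ by simp [lhsCert, lhsTerm_of_lt]) lhsTerm_telescopes
  · refine diagonalSum_recurrence_of_telescoping _ _ _ (G := rhsCert) (fun _ _ ↦ rhsTerm_of_lt)
      (fun _ ↦ by simp [rhsCert]) (fun _ ↦ by simp [rhsCert, rhsTerm_of_lt]) rhsTerm_telescopes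
  · simp [diagonalSum, lhsTerm, rhsTerm, trinom_zero]
  · norm_num [diagonalSum, sum_range_succ, lhsTerm, rhsTerm, trinom, centralBinom]

theorem stmt_1 (n : ℕ) :
    ∑ k ∈ Finset.range (n + 1),
      ((Nat.choose (2 * k) k : ℤ) ^ 2 * (Nat.choose (3 * k) k) *
        (Nat.choose k (n - k)) * (-27) ^ (n - k))
    = ∑ k ∈ Finset.range (n + 1),
      ((Nat.choose (2 * k) k : ℤ) * (Nat.choose (3 * k) k) *
        (Nat.choose (2 * (n - k)) (n - k)) * (Nat.choose (3 * (n - k)) (n - k))) := by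
  apply Int.cast_injective (α := ℚ)
  push_cast
  convert congrFun diagonalSum_lhsTerm_eq_rhsTerm n using 1 <;>
    refine sum_congr rfl fun k hk ↦ ?_
  · rw [lhsTerm, if_pos (mem_range_succ_iff.1 hk), centralBinom_eq_two_mul_choose, trinom]
    push_cast
    ring
  · rw [rhsTerm, if_pos (mem_range_succ_iff.1 hk), trinom, trinom]
    push_cast
    ring
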